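/- Let A be a bounded A∞-algebra over a ground ring of characteristic 2, let M = ({M^i}_{i∈I}, {F^{i<i'}}) be an I-filtered A∞-module over A, and let P = ({P^j}_{j∈J}, {h¹_{j<j'}}) be a J-filtered type D structure over A, where I and J are finite partially ordered sets. Assume that at least one of M or P is bounded, so that the box tensor product M ⊠ P is defined. Then M ⊠ P = ⊕_{(i,j)∈I×J} M^i ⊗ P^j, equipped with the structure maps D^{i×j < i'×j'} defined by summing over all chains j = j₀ < … < j_n = j' the compositions which iterate δ on the P^{j_m}, interleave the morphisms h¹_{j_m<j_{m+1}}, and feed all resulting algebra outputs into F^{i≤i'} (where F^{i≤i'} is the A∞-action m^i when i = i'), is naturally an I×J-filtered chain complex. -/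

import Mathlib

/-!
Extending the structure maps by zero off the order relations turns the filtered data into
unfiltered data: the maps `Φ i i'` assemble into a single A∞-action `amalgamate Φ` on `Π i, M i`,
and the `Δ j j'` into a single type D matrix `amalgamateMatrix Δ` on the generators `Σ j, Q j`.
The structure maps of `M ⊠ P` then form the usual box tensor differential `boxD`, a sum over paths
of generators, and `boxD ∘ boxD` is a sum over paths cut in two. By the A∞ relation, the cuts of
the paths of length `k` cancel against the terms in which `dA` hits one label (`differentialSum`)
or two adjacent labels are multiplied (`mergeSum`); by the type D relation the `dA`-terms of
length `k` are the product terms of length `k + 1`, obtained by inserting the intermediate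
generator. So the square telescopes, and boundedness kills its top end. Filtration is respected
because every structure map goes up in `I`, and nonzero paths are monotone in `J`.
-/

open scoped Classical

open Finset

namespace BoxTensor

lemma sum_range_sum_range_eq_sum_range_sum_range_succ {V : Type*} [AddCommMonoid V] (N : ℕ)
    (R : ℕ → ℕ → V) (hR : ∀ m n, N ≤ m ∨ N ≤ n → R (m + n) m = 0) :
    ∑ m ∈ range N, ∑ n ∈ range N, R (m + n) m
      = ∑ k ∈ range (2 * N), ∑ t ∈ range (k + 1), R k t :=
  calc ∑ m ∈ range N, ∑ n ∈ range N, R (m + n) m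
      = ∑ m ∈ range N, ∑ n ∈ range (2 * N - m), R (m + n) m :=
        sum_congr rfl fun m hm => sum_subset (range_subset_range.2 (by simp at hm; omega))
          fun n _ hn => hR m n (Or.inr (by simpa using hn))
    _ = ∑ m ∈ range (2 * N), ∑ n ∈ range (2 * N - m), R (m + n) m :=
        sum_subset (range_subset_range.2 (by omega))
          fun m _ hm => sum_eq_zero fun n _ => hR m n (Or.inl (by simpa using hm))
    _ = ∑ k ∈ range (2 * N), ∑ t ∈ range (k + 1), R (t + (k - t)) t :=
        (sum_range_diag_flip _ fun m n => R (m + n) m).symm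
    _ = ∑ k ∈ range (2 * N), ∑ t ∈ range (k + 1), R k t :=
        sum_congr rfl fun k _ => sum_congr rfl fun t ht => by
          rw [Nat.add_sub_cancel' (by simp at ht; omega)]

section Multiadditive

variable {A X Y : Type*} [AddCommMonoid A] [AddCommGroup X] [AddCommGroup Y]

structure IsMultiadditive (F : X → List A → Y) : Prop where
  map_add_left : ∀ x y as, F (x + y) as = F x as + F y as
  map_add_slot : ∀ x pre (a b : A) post,
    F x (pre ++ (a + b) :: post) = F x (pre ++ a :: post) + F x (pre ++ b :: post)

namespace IsMultiadditive

variable {F : X → List A → Y} (hF : IsMultiadditive F)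
include hF

lemma map_sum_left {γ : Type*} (s : Finset γ) (x : γ → X) (as : List A) :
    F (∑ c ∈ s, x c) as = ∑ c ∈ s, F (x c) as :=
  map_sum (AddMonoidHom.mk' (F · as) fun x y => hF.map_add_left x y as) x s

lemma map_zero_left (as : List A) : F 0 as = 0 := by
  simpa using hF.map_sum_left (∅ : Finset Unit) (fun _ => 0) as

lemma map_sum_slot {γ : Type*} (s : Finset γ) (x : X) (pre : List A) (a : γ → A)
    (post : List A) :
    F x (pre ++ (∑ c ∈ s, a c) :: post) = ∑ c ∈ s, F x (pre ++ a c :: post) :=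
  map_sum (AddMonoidHom.mk' (fun b => F x (pre ++ b :: post))
    fun a b => hF.map_add_slot x pre a b post) a s

lemma eq_zero_of_zero_mem {x : X} {as : List A} (h : (0 : A) ∈ as) : F x as = 0 := by
  obtain ⟨pre, post, rfl⟩ := List.append_of_mem h
  simpa using hF.map_sum_slot (∅ : Finset Unit) x pre (fun _ => 0) post

end IsMultiadditive

end Multiadditive

section MergeAt

variable {A : Type*} [MulZeroClass A]

def mergeAt (as : List A) (t : ℕ) : List A :=
  as.take t ++ (as.getD t 0 * as.getD (t + 1) 0) :: as.drop (t + 2)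

lemma length_mergeAt {as : List A} {t : ℕ} (h : t + 2 ≤ as.length) :
    (mergeAt as t).length = as.length - 1 := by
  simp only [mergeAt, List.length_append, List.length_take, List.length_cons, List.length_drop]
  omega

lemma zero_mem_mergeAt {as : List A} {t : ℕ} (h : t + 2 ≤ as.length) (h0 : (0 : A) ∈ as) :
    (0 : A) ∈ mergeAt as t := by
  have hdrop : as.drop t = as.getD t 0 :: as.getD (t + 1) 0 :: as.drop (t + 2) := by
    rw [List.drop_eq_getElem_cons (by omega), List.drop_eq_getElem_cons (by omega),
      List.getD_eq_getElem _ _ (by omega), List.getD_eq_getElem _ _ (by omega)]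
  rw [← List.take_append_drop t as, hdrop] at h0
  simp only [mergeAt, List.mem_append, List.mem_cons] at h0 ⊢
  rcases h0 with h0 | h0 | h0 | h0
  · exact Or.inl h0
  · exact Or.inr (Or.inl (by rw [← h0, zero_mul]))
  · exact Or.inr (Or.inl (by rw [← h0, mul_zero]))
  · exact Or.inr (Or.inr h0)

lemma mergeAt_append_cons_cons {pre : List A} {t : ℕ} (h : pre.length = t) (a b : A)
    (post : List A) : mergeAt (pre ++ a :: b :: post) t = pre ++ (a * b) :: post := by
  subst h
  simp [mergeAt, List.getD_eq_getElem?_getD, List.drop_append]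

end MergeAt

section Paths

variable {A β : Type*} (d : β → β → A)

def pathLabels {n : ℕ} (s : Fin (n + 1) → β) : List A :=
  List.ofFn fun t : Fin n => d (s t.castSucc) (s t.succ)

@[simp]
lemma length_pathLabels {n : ℕ} (s : Fin (n + 1) → β) : (pathLabels d s).length = n := by
  simp [pathLabels]

lemma getElem_pathLabels {n : ℕ} (s : Fin (n + 1) → β) (t : ℕ)
    (h : t < (pathLabels d s).length) :
    (pathLabels d s)[t] = d (s ⟨t, by simp at h; omega⟩) (s ⟨t + 1, by simp at h; omega⟩) := by
  simp [pathLabels]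

lemma take_pathLabels {m n : ℕ} (s : Fin (m + n + 1) → β) :
    (pathLabels d s).take m
      = pathLabels d (fun u : Fin (m + 1) => s (Fin.castLE (by omega) u)) := by
  apply List.ext_getElem (by simp)
  intro t h1 h2
  simp only [List.getElem_take, getElem_pathLabels]
  rfl

lemma drop_pathLabels {m n : ℕ} (s : Fin (m + n + 1) → β) :
    (pathLabels d s).drop m = pathLabels d (fun v : Fin (n + 1) => s (Fin.natAdd m v)) := by
  apply List.ext_getElem (by simp)
  intro t h1 h2
  simp only [List.getElem_drop, getElem_pathLabels]
  congr 2

lemma insertNth_apply_of_le {k t : ℕ} (ht : t < k) (s : Fin (k + 1) → β) (g : β) {u : ℕ}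
    (hu : u ≤ t) :
    Fin.insertNth (α := fun _ => β) ⟨t + 1, by omega⟩ g s ⟨u, by omega⟩ = s ⟨u, by omega⟩ := by
  rw [Fin.insertNth_apply_below (by simp [Fin.lt_def]; omega)]
  simp only [eq_rec_constant]
  rfl

lemma insertNth_apply_of_gt {k t : ℕ} (ht : t < k) (s : Fin (k + 1) → β) (g : β) {u : ℕ}
    (hu : t + 1 < u) (hu' : u < k + 2) :
    Fin.insertNth (α := fun _ => β) ⟨t + 1, by omega⟩ g s ⟨u, hu'⟩ = s ⟨u - 1, by omega⟩ := by
  rw [Fin.insertNth_apply_above (by simp [Fin.lt_def]; omega)]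
  simp only [eq_rec_constant]
  rfl

lemma pathLabels_insertNth {k t : ℕ} (ht : t < k) (s : Fin (k + 1) → β) (g : β) :
    pathLabels d (Fin.insertNth (α := fun _ => β) ⟨t + 1, by omega⟩ g s)
      = (pathLabels d s).take t ++ d (s ⟨t, by omega⟩) g :: d g (s ⟨t + 1, by omega⟩)
          :: (pathLabels d s).drop (t + 1) := by
  apply List.ext_getElem (by simp; omega)
  intro u h1 h2
  simp only [length_pathLabels] at h1
  rw [getElem_pathLabels]
  rcases lt_trichotomy u t with hu | rfl | hu
  · rw [List.getElem_append_left (by simp; omega), List.getElem_take, getElem_pathLabels,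
      insertNth_apply_of_le ht s g hu.le, insertNth_apply_of_le ht s g hu]
  · rw [List.getElem_append_right (by simp)]
    simp only [List.length_take, length_pathLabels, min_eq_left ht.le, Nat.sub_self,
      List.getElem_cons_zero]
    rw [insertNth_apply_of_le ht s g le_rfl]
    exact congrArg _ (Fin.insertNth_apply_same _ _ _)
  · rw [List.getElem_append_right (by simp; omega)]
    simp only [List.length_take, length_pathLabels, min_eq_left ht.le]
    rw [insertNth_apply_of_gt ht s g (u := u + 1) (by omega)]
    obtain ⟨w, rfl⟩ := Nat.exists_eq_add_of_lt hu
    rcases w with _ | w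
    · simp only [show t + 0 + 1 - t = 0 + 1 by omega, List.getElem_cons_succ,
        List.getElem_cons_zero]
      exact congrArg (d · _) (Fin.insertNth_apply_same _ _ _)
    · simp only [show t + (w + 1) + 1 - t = w + 1 + 1 by omega, List.getElem_cons_succ,
        List.getElem_drop, getElem_pathLabels]
      rw [insertNth_apply_of_gt ht s g (by omega)]
      congr 2 <;> ext <;> simp <;> omega

variable [Fintype β]

lemma sum_paths_split {V : Type*} [AddCommMonoid V] (m n : ℕ)
    (K : (Fin (m + 1) → β) → (Fin (n + 1) → β) → V) :
    ∑ s : Fin (m + n + 1) → β,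
        K (fun u => s (Fin.castLE (by omega) u)) (fun v => s (Fin.natAdd m v))
      = ∑ r, ∑ p, if r (Fin.last m) = p 0 then K r p else 0 := by
  have hsplit (u : Fin m → β) (p : Fin (n + 1) → β) :
      (fun i : Fin (m + 1) => Fin.append u p (Fin.castLE (by omega) i)) = Fin.snoc u (p 0) := by
    funext i
    refine Fin.lastCases ?_ (fun i => ?_) i
    · rw [Fin.snoc_last]
      convert Fin.append_right u p 0 using 2
      ext; simp
    · rw [Fin.snoc_castSucc]
      convert Fin.append_left u p i using 2
      ext; simp
  calc ∑ s : Fin (m + n + 1) → β,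
        K (fun u => s (Fin.castLE (by omega) u)) (fun v => s (Fin.natAdd m v))
      = ∑ u : Fin m → β, ∑ p : Fin (n + 1) → β, K (Fin.snoc u (p 0)) p := by
        rw [← Fintype.sum_prod_type']
        exact (Fintype.sum_equiv (Fin.appendEquiv m (n + 1)) _ _ fun up => by
          simp only [Fin.appendEquiv_apply, hsplit, Fin.append_right]).symm
    _ = ∑ r, ∑ p, if r (Fin.last m) = p 0 then K r p else 0 := by
        symm
        rw [← (Fin.snocEquiv fun _ => β).sum_comp, Fintype.sum_prod_type_right]
        refine sum_congr rfl fun u _ => ?_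
        rw [sum_comm]
        simp [Fin.snocEquiv]

lemma sum_paths_insertNth {V : Type*} [AddCommMonoid V] {k : ℕ} (p : Fin (k + 2))
    (F : (Fin (k + 2) → β) → V) :
    ∑ s', F s' = ∑ s : Fin (k + 1) → β, ∑ g, F (Fin.insertNth (α := fun _ => β) p g s) := by
  rw [← (Fin.insertNthEquiv (fun _ => β) p).sum_comp, Fintype.sum_prod_type, sum_comm]
  rfl

end Paths

lemma exists_pathLabels_vanish {A X β : Type*} [NonUnitalNonAssocSemiring A] [AddCommGroup X]
    {μ : X → List A → X} {d : β → β → A} (hμ : IsMultiadditive μ)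
    (hbounded : (∃ N, ∀ x as, N ≤ as.length → μ x as = 0)
      ∨ ∃ N, ∀ n, N ≤ n → ∀ s : Fin (n + 1) → β, (0 : A) ∈ pathLabels d s) :
    ∃ N, ∀ n, N ≤ n → ∀ (s : Fin (n + 1) → β) x,
      μ x (pathLabels d s) = 0 ∧ ∀ t, t + 2 ≤ n → μ x (mergeAt (pathLabels d s) t) = 0 := by
  rcases hbounded with ⟨N, hN⟩ | ⟨N, hN⟩
  · refine ⟨N + 1, fun n hn s x => ⟨hN _ _ (by simp; omega), fun t ht => hN _ _ ?_⟩⟩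
    rw [length_mergeAt (by simpa using ht), length_pathLabels]
    omega
  · exact ⟨N, fun n hn s x => ⟨hμ.eq_zero_of_zero_mem (hN n hn s), fun t ht =>
      hμ.eq_zero_of_zero_mem (zero_mem_mergeAt (by simpa using ht) (hN n hn s))⟩⟩

section BoxDifferential

variable {A X β : Type*} [AddCommGroup X] [Fintype β] (μ : X → List A → X) (d : β → β → A)

noncomputable def pathSum (n : ℕ) (f : β → X) (g : β) : X :=
  ∑ s : Fin (n + 1) → β with s (Fin.last n) = g, μ (f (s 0)) (pathLabels d s)

noncomputable def boxD (f : β → X) (g : β) : X :=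
  ∑ᶠ n, pathSum μ d n f g

noncomputable def splitSum (k t : ℕ) (f : β → X) (g : β) : X :=
  ∑ s : Fin (k + 1) → β with s (Fin.last k) = g,
    μ (μ (f (s 0)) ((pathLabels d s).take t)) ((pathLabels d s).drop t)

variable {μ d}

lemma boxD_eq_sum_range {N : ℕ}
    (hN : ∀ n, N ≤ n → ∀ (s : Fin (n + 1) → β) x, μ x (pathLabels d s) = 0) (f : β → X) :
    boxD μ d f = ∑ n ∈ range N, pathSum μ d n f := by
  funext g
  rw [Finset.sum_apply]
  refine finsum_eq_sum_of_support_subset _ fun n hn => ?_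
  simp only [Function.mem_support, coe_range, Set.mem_Iio] at hn ⊢
  by_contra h
  exact hn (sum_eq_zero fun s _ => hN n (by omega) s _)

variable [NonUnitalNonAssocSemiring A]

variable (μ d) in
noncomputable def differentialSum (dA : A → A) (k : ℕ) (f : β → X) (g : β) : X :=
  ∑ t ∈ range k, ∑ s : Fin (k + 1) → β with s (Fin.last k) = g,
    μ (f (s 0)) ((pathLabels d s).set t (dA ((pathLabels d s).getD t 0)))

variable (μ d) in
noncomputable def mergeSum (k : ℕ) (f : β → X) (g : β) : X :=
  ∑ t ∈ range (k - 1), ∑ s : Fin (k + 1) → β with s (Fin.last k) = g,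
    μ (f (s 0)) (mergeAt (pathLabels d s) t)

variable (μ) in
/-- The A∞-module relations over the dg algebra `(A, dA)`, viewed as an A∞-algebra whose only
operations are `dA` and the product. -/
def IsAInftyAction (dA : A → A) : Prop :=
  ∀ x as, (∑ t ∈ range (as.length + 1), μ (μ x (as.take t)) (as.drop t))
    + (∑ t ∈ range as.length, μ x (as.set t (dA (as.getD t 0))))
    + ∑ t ∈ range (as.length - 1), μ x (mergeAt as t) = 0

lemma pathSum_sum (hμ : IsMultiadditive μ) {γ : Type*} (n : ℕ) (u : Finset γ)
    (f : γ → β → X) :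
    pathSum μ d n (∑ c ∈ u, f c) = ∑ c ∈ u, pathSum μ d n (f c) := by
  funext g
  simp only [pathSum, Finset.sum_apply, hμ.map_sum_left]
  exact sum_comm

lemma pathSum_pathSum (hμ : IsMultiadditive μ) (m n : ℕ) (f : β → X) :
    pathSum μ d n (pathSum μ d m f) = splitSum μ d (m + n) m f := by
  funext g
  calc pathSum μ d n (pathSum μ d m f) g
      = ∑ r, ∑ p, if r (Fin.last m) = p 0 then
          (if p (Fin.last n) = g then μ (μ (f (r 0)) (pathLabels d r)) (pathLabels d p) else 0)
          else 0 := by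
        simp only [pathSum, hμ.map_sum_left]
        simp only [sum_filter]
        conv_rhs => rw [sum_comm]
        refine sum_congr rfl fun p _ => ?_
        by_cases hp : p (Fin.last n) = g <;> simp [hp]
    _ = splitSum μ d (m + n) m f g := by
        rw [← sum_paths_split, splitSum, sum_filter]
        refine sum_congr rfl fun s _ => ?_
        rw [take_pathLabels, drop_pathLabels]
        congr 2

lemma splitSum_add_eq_zero (hμ : IsMultiadditive μ) {m n : ℕ}
    (h : (∀ (s : Fin (m + 1) → β) x, μ x (pathLabels d s) = 0)
      ∨ ∀ (s : Fin (n + 1) → β) x, μ x (pathLabels d s) = 0) (f : β → X) (g : β) :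
    splitSum μ d (m + n) m f g = 0 := by
  refine sum_eq_zero fun s _ => ?_
  rw [take_pathLabels, drop_pathLabels]
  rcases h with h | h
  · rw [h, hμ.map_zero_left]
  · rw [h]

lemma sum_splitSum_add_differentialSum_add_mergeSum {dA : A → A} (hA : IsAInftyAction μ dA)
    (k : ℕ) (f : β → X) (g : β) :
    ∑ t ∈ range (k + 1), splitSum μ d k t f g + differentialSum μ d dA k f g
      + mergeSum μ d k f g = 0 := by
  have hpath := fun s : Fin (k + 1) → β => hA (f (s 0)) (pathLabels d s)
  simp only [length_pathLabels] at hpath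
  simp only [splitSum, differentialSum, mergeSum]
  rw [sum_comm, sum_comm (s := range k), sum_comm (s := range (k - 1)),
    ← sum_add_distrib, ← sum_add_distrib]
  exact sum_eq_zero fun s _ => hpath s

lemma differentialSum_eq_mergeSum_succ (hμ : IsMultiadditive μ) {dA : A → A}
    (hd : ∀ g g'', dA (d g g'') = ∑ g', d g g' * d g' g'') (k : ℕ) (f : β → X) (g : β) :
    differentialSum μ d dA k f g = mergeSum μ d (k + 1) f g := by
  simp only [differentialSum, mergeSum, Nat.add_sub_cancel]
  refine sum_congr rfl fun t ht => ?_
  have ht : t < k := mem_range.1 ht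
  have hstart (s : Fin (k + 1) → β) (g' : β) :
      Fin.insertNth (α := fun _ => β) ⟨t + 1, by omega⟩ g' s 0 = s 0 :=
    insertNth_apply_of_le ht s g' (Nat.zero_le t)
  have hend (s : Fin (k + 1) → β) (g' : β) :
      Fin.insertNth (α := fun _ => β) ⟨t + 1, by omega⟩ g' s (Fin.last (k + 1))
        = s (Fin.last k) :=
    (insertNth_apply_of_gt ht s g' (by omega) _).trans (congrArg s (Fin.ext (by simp)))
  rw [sum_filter, sum_filter, sum_paths_insertNth ⟨t + 1, by omega⟩]
  refine sum_congr rfl fun s _ => ?_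
  simp only [hstart, hend]
  by_cases hs : s (Fin.last k) = g
  · simp only [hs, if_true]
    rw [List.getD_eq_getElem _ _ (by simpa using ht), getElem_pathLabels, hd,
      List.set_eq_take_cons_drop _ (by simpa using ht), hμ.map_sum_slot]
    refine sum_congr rfl fun g' _ => ?_
    rw [pathLabels_insertNth d ht, mergeAt_append_cons_cons (by simp [ht.le])]
  · simp [hs]

lemma mergeSum_eq_zero {k : ℕ}
    (h : ∀ (s : Fin (k + 1) → β) t, t + 2 ≤ k → ∀ x, μ x (mergeAt (pathLabels d s) t) = 0)
    (f : β → X) (g : β) : mergeSum μ d k f g = 0 :=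
  sum_eq_zero fun t ht => sum_eq_zero fun s _ => h s t (by simp at ht; omega) _

theorem boxD_boxD [Module (ZMod 2) X] (hμ : IsMultiadditive μ) {dA : A → A}
    (hA : IsAInftyAction μ dA) (hd : ∀ g g'', dA (d g g'') = ∑ g', d g g' * d g' g'')
    (hbounded : (∃ N, ∀ x as, N ≤ as.length → μ x as = 0)
      ∨ ∃ N, ∀ n, N ≤ n → ∀ s : Fin (n + 1) → β, (0 : A) ∈ pathLabels d s)
    (f : β → X) : boxD μ d (boxD μ d f) = 0 := by
  obtain ⟨N, hN⟩ := exists_pathLabels_vanish hμ hbounded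
  have hlabels := fun n hn s x => (hN n hn s x).1
  have hrow (k : ℕ) : ∑ t ∈ range (k + 1), splitSum μ d k t f
      = mergeSum μ d (k + 1) f - mergeSum μ d k f := by
    funext g
    have h := sum_splitSum_add_differentialSum_add_mergeSum (d := d) hA k f g
    rw [differentialSum_eq_mergeSum_succ hμ hd, add_assoc, add_eq_zero_iff_eq_neg,
      ZModModule.neg_eq_self] at h
    simp only [Finset.sum_apply, h, Pi.sub_apply, ZModModule.sub_eq_add]
  calc boxD μ d (boxD μ d f)
      = ∑ m ∈ range N, ∑ n ∈ range N, splitSum μ d (m + n) m f := by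
        rw [boxD_eq_sum_range hlabels, boxD_eq_sum_range hlabels, sum_comm]
        simp only [pathSum_sum hμ, pathSum_pathSum hμ]
    _ = ∑ k ∈ range (2 * N), ∑ t ∈ range (k + 1), splitSum μ d k t f :=
        sum_range_sum_range_eq_sum_range_sum_range_succ N (fun k t => splitSum μ d k t f)
          fun m n h => funext (splitSum_add_eq_zero hμ (h.imp (hlabels m) (hlabels n)) f)
    _ = mergeSum μ d (2 * N) f - mergeSum μ d 0 f := by
        simp only [hrow]
        exact sum_range_sub (fun k => mergeSum μ d k f) _
    _ = 0 := by
        rw [sub_eq_zero]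
        funext g
        rw [mergeSum_eq_zero (fun s t ht x => (hN _ (by omega) s x).2 t ht),
          mergeSum_eq_zero (fun s t ht => by omega)]

end BoxDifferential

section Amalgamate

variable {A I : Type*} [PartialOrder I] {M : I → Type*} [∀ i, AddCommGroup (M i)]

noncomputable def extendByZero (Φ : ∀ i i' : I, i ≤ i' → M i → List A → M i') (i i' : I)
    (x : M i) (as : List A) : M i' :=
  if h : i ≤ i' then Φ i i' h x as else 0

noncomputable def amalgamate [Fintype I] (Φ : ∀ i i' : I, i ≤ i' → M i → List A → M i')
    (x : ∀ i, M i) (as : List A) : ∀ i, M i :=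
  fun i' => ∑ i, extendByZero Φ i i' (x i) as

def IsFilteredAInftyAction [Fintype I] [NonUnitalNonAssocSemiring A]
    (Φ : ∀ i i' : I, i ≤ i' → M i → List A → M i') (dA : A → A) : Prop :=
  ∀ i i'' (h : i ≤ i'') (x : M i) (as : List A),
    (∑ i' : I, if h' : i ≤ i' ∧ i' ≤ i'' then
        ∑ t ∈ range (as.length + 1), Φ i' i'' h'.2 (Φ i i' h'.1 x (as.take t)) (as.drop t)
      else 0)
    + (∑ t ∈ range as.length, Φ i i'' h x (as.set t (dA (as.getD t 0))))
    + (∑ t ∈ range (as.length - 1), Φ i i'' h x (mergeAt as t)) = 0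

variable {Φ : ∀ i i' : I, i ≤ i' → M i → List A → M i'}

lemma exists_amalgamate_eq_zero [Fintype I]
    (hbounded : ∃ N, ∀ i i' h (x : M i) (as : List A), N ≤ as.length → Φ i i' h x as = 0) :
    ∃ N, ∀ x as, N ≤ List.length as → amalgamate Φ x as = 0 := by
  obtain ⟨N, hN⟩ := hbounded
  refine ⟨N, fun x as h => funext fun i' => sum_eq_zero fun i _ => ?_⟩
  unfold extendByZero
  split_ifs
  exacts [hN _ _ _ _ _ h, rfl]

section

variable [AddCommMonoid A]

lemma isMultiadditive_extendByZero
    (hΦadd : ∀ i i' h (x y : M i) as, Φ i i' h (x + y) as = Φ i i' h x as + Φ i i' h y as)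
    (hΦml : ∀ i i' h (x : M i) pre (a b : A) post,
      Φ i i' h x (pre ++ (a + b) :: post)
        = Φ i i' h x (pre ++ a :: post) + Φ i i' h x (pre ++ b :: post))
    (i i' : I) : IsMultiadditive (extendByZero Φ i i') := by
  constructor <;> intros <;> unfold extendByZero <;> split_ifs <;> simp [hΦadd, hΦml]

lemma extendByZero_extendByZero (hΦ : ∀ i i', IsMultiadditive (extendByZero Φ i i'))
    {i i' i'' : I} (x : M i) (as bs : List A) :
    extendByZero Φ i' i'' (extendByZero Φ i i' x as) bs
      = if h : i ≤ i' ∧ i' ≤ i'' then Φ i' i'' h.2 (Φ i i' h.1 x as) bs else 0 := by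
  by_cases h₁ : i ≤ i'
  · by_cases h₂ : i' ≤ i''
    · simp [extendByZero, h₁, h₂]
    · simp [extendByZero, h₂]
  · rw [show extendByZero Φ i i' x as = 0 from dif_neg h₁, (hΦ i' i'').map_zero_left,
      dif_neg fun h => h₁ h.1]

variable [Fintype I]

lemma isMultiadditive_amalgamate (hΦ : ∀ i i', IsMultiadditive (extendByZero Φ i i')) :
    IsMultiadditive (amalgamate Φ) := by
  constructor <;> intros <;> funext i' <;>
    simp only [amalgamate, Pi.add_apply, (hΦ _ i').map_add_left, (hΦ _ i').map_add_slot,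
      sum_add_distrib]

lemma extendByZero_eq_amalgamate_single (hΦ : ∀ i i', IsMultiadditive (extendByZero Φ i i'))
    (i i' : I) (x : M i) (as : List A) :
    extendByZero Φ i i' x as = amalgamate Φ (Pi.single i x) as i' := by
  rw [amalgamate, sum_eq_single i
    (fun i₀ _ h => by rw [Pi.single_eq_of_ne h, (hΦ _ _).map_zero_left])
    (fun h => absurd (mem_univ i) h), Pi.single_eq_same]

end

variable [Fintype I] [NonUnitalNonAssocSemiring A]

lemma extendByZero_aInfty (hΦ : ∀ i i', IsMultiadditive (extendByZero Φ i i')) {dA : A → A}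
    (hAinfty : IsFilteredAInftyAction Φ dA) (i i'' : I) (x : M i) (as : List A) :
    ∑ t ∈ range (as.length + 1),
        ∑ i', extendByZero Φ i' i'' (extendByZero Φ i i' x (as.take t)) (as.drop t)
      + ∑ t ∈ range as.length, extendByZero Φ i i'' x (as.set t (dA (as.getD t 0)))
      + ∑ t ∈ range (as.length - 1), extendByZero Φ i i'' x (mergeAt as t) = 0 := by
  by_cases h : i ≤ i''
  · convert hAinfty i i'' h x as using 3
    · rw [sum_comm]
      refine sum_congr rfl fun i' _ => ?_
      simp only [extendByZero_extendByZero hΦ]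
      split_ifs <;> simp
    · simp [extendByZero, h]
    · simp [extendByZero, h]
  · have hext (i' : I) (y : M i) (bs cs : List A) :
        extendByZero Φ i' i'' (extendByZero Φ i i' y bs) cs = 0 := by
      rw [extendByZero_extendByZero hΦ, dif_neg fun h' => h (h'.1.trans h'.2)]
    simp only [hext, sum_const_zero, zero_add]
    simp [extendByZero, h]

lemma isAInftyAction_amalgamate (hΦ : ∀ i i', IsMultiadditive (extendByZero Φ i i'))
    (dA : A → A) (hAinfty : IsFilteredAInftyAction Φ dA) :
    IsAInftyAction (amalgamate Φ) dA := by
  intro x as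
  funext i''
  simp only [Pi.add_apply, Finset.sum_apply, Pi.zero_apply, amalgamate, (hΦ _ _).map_sum_left]
  rw [← sum_eq_zero fun i _ => extendByZero_aInfty hΦ hAinfty i i'' (x i) as]
  simp only [sum_add_distrib]
  congr 2
  · rw [sum_comm (s := univ)]
    exact sum_congr rfl fun t _ => sum_comm
  · exact sum_comm
  · exact sum_comm

end Amalgamate

section AmalgamateMatrix

variable {A J : Type*} [PartialOrder J] {Q : J → Type*}

noncomputable def amalgamateMatrix [Zero A] (Δ : ∀ j j' : J, j ≤ j' → Q j → Q j' → A)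
    (g g' : Σ j, Q j) : A :=
  if h : g.1 ≤ g'.1 then Δ g.1 g'.1 h g.2 g'.2 else 0

variable {Δ : ∀ j j' : J, j ≤ j' → Q j → Q j' → A}

lemma amalgamateMatrix_mul_amalgamateMatrix [MulZeroClass A] (g g'' : Σ j, Q j) (j' : J)
    (p : Q j') :
    amalgamateMatrix Δ g ⟨j', p⟩ * amalgamateMatrix Δ ⟨j', p⟩ g''
      = if h : g.1 ≤ j' ∧ j' ≤ g''.1 then Δ g.1 j' h.1 g.2 p * Δ j' g''.1 h.2 p g''.2
        else 0 := by
  unfold amalgamateMatrix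
  by_cases h₁ : g.1 ≤ j' <;> by_cases h₂ : j' ≤ g''.1 <;> simp [h₁, h₂]

lemma apply_amalgamateMatrix_eq_sum_mul [Ring A] [Module (ZMod 2) A] [Fintype J]
    [∀ j, Fintype (Q j)] (dA : A →ₗ[ZMod 2] A)
    (hTypeD : ∀ j j'' (h : j ≤ j'') (q : Q j) (r : Q j''),
      dA (Δ j j'' h q r)
        + ∑ j' : J, (if h' : j ≤ j' ∧ j' ≤ j'' then
            ∑ p : Q j', Δ j j' h'.1 q p * Δ j' j'' h'.2 p r
          else 0)
      = 0)
    (g g'' : Σ j, Q j) :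
    dA (amalgamateMatrix Δ g g'')
      = ∑ g', amalgamateMatrix Δ g g' * amalgamateMatrix Δ g' g'' := by
  rw [← univ_sigma_univ, sum_sigma]
  simp only [amalgamateMatrix_mul_amalgamateMatrix, sum_dite_irrel, sum_const_zero]
  by_cases h : g.1 ≤ g''.1
  · have hg := hTypeD g.1 g''.1 h g.2 g''.2
    rw [add_eq_zero_iff_eq_neg, ZModModule.neg_eq_self] at hg
    rw [amalgamateMatrix, dif_pos h, hg]
  · rw [amalgamateMatrix, dif_neg h, map_zero]
    exact (sum_eq_zero fun j' _ => dif_neg fun h' => h (h'.1.trans h'.2)).symm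

variable [Zero A]

lemma zero_mem_pathLabels_of_not_monotone {n : ℕ} {s : Fin (n + 1) → Σ j, Q j}
    (hs : ¬ Monotone fun t => (s t).1) : (0 : A) ∈ pathLabels (amalgamateMatrix Δ) s := by
  obtain ⟨t, ht⟩ : ∃ t : Fin n, ¬ (s t.castSucc).1 ≤ (s t.succ).1 := by
    simpa [Fin.monotone_iff_le_succ] using hs
  exact List.mem_ofFn.2 ⟨t, dif_neg ht⟩

lemma pathLabels_amalgamateMatrix_of_monotone {n : ℕ} {s : Fin (n + 1) → Σ j, Q j}
    (hs : Monotone fun t => (s t).1) :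
    pathLabels (amalgamateMatrix Δ) s = List.ofFn fun t : Fin n =>
      Δ (s t.castSucc).1 (s t.succ).1 (hs (Fin.castSucc_lt_succ : t.castSucc < t.succ).le)
        (s t.castSucc).2 (s t.succ).2 :=
  congrArg List.ofFn (funext fun _ => dif_pos _)

lemma exists_zero_mem_pathLabels_amalgamateMatrix
    (hbounded : ∃ N, ∀ n, N ≤ n → ∀ js : Fin (n + 1) → J, ∀ hm : Monotone js,
        ∀ qs : ∀ t, Q (js t), ∃ t : Fin n,
          Δ (js t.castSucc) (js t.succ) (hm (Fin.castSucc_lt_succ : t.castSucc < t.succ).le)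
            (qs t.castSucc) (qs t.succ) = 0) :
    ∃ N, ∀ n, N ≤ n → ∀ s : Fin (n + 1) → Σ j, Q j,
      (0 : A) ∈ pathLabels (amalgamateMatrix Δ) s := by
  obtain ⟨N, hN⟩ := hbounded
  refine ⟨N, fun n hn s => ?_⟩
  by_cases hs : Monotone fun t => (s t).1
  · obtain ⟨t, ht⟩ := hN n hn _ hs fun t => (s t).2
    rw [pathLabels_amalgamateMatrix_of_monotone hs]
    exact List.mem_ofFn.2 ⟨t, ht⟩
  · exact zero_mem_pathLabels_of_not_monotone hs

end AmalgamateMatrix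

section BoxTensorMap

variable {A I J : Type*} [Fintype I] [PartialOrder I] [Fintype J] [PartialOrder J]
  {M : I → Type*} [∀ i, AddCommGroup (M i)] {Q : J → Type*} [∀ j, Fintype (Q j)]

noncomputable def boxTensorMap (Φ : ∀ i i' : I, i ≤ i' → M i → List A → M i')
    (Δ : ∀ j j' : J, j ≤ j' → Q j → Q j' → A) (f : ∀ i j, Q j → M i) (i' : I) (j' : J)
    (q' : Q j') : M i' :=
  ∑ i : I, if hi : i ≤ i' then
    ∑ᶠ n : ℕ,
      ∑ p : Fin (n + 1) → (Σ j : J, Q j),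
        if hp : Monotone (fun t => (p t).1) ∧ p (Fin.last n) = ⟨j', q'⟩ then
          Φ i i' hi (f i (p 0).1 (p 0).2)
            (List.ofFn (fun t : Fin n =>
              Δ (p t.castSucc).1 (p t.succ).1
                (hp.1 (Fin.castSucc_lt_succ : t.castSucc < t.succ).le)
                (p t.castSucc).2 (p t.succ).2))
        else 0
  else 0

variable {Φ : ∀ i i' : I, i ≤ i' → M i → List A → M i'}
  {Δ : ∀ j j' : J, j ≤ j' → Q j → Q j' → A}

lemma boxTensorMap_eq_zero_of_isLowerSet (hΦ0 : ∀ i i' h (as : List A), Φ i i' h 0 as = 0)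
    {S : Set (I × J)} (hS : IsLowerSet S) {f : ∀ i j, Q j → M i}
    (hf : ∀ i j, (i, j) ∈ S → f i j = 0) {i : I} {j : J} (hij : (i, j) ∈ S) :
    boxTensorMap Φ Δ f i j = 0 := by
  funext q
  refine sum_eq_zero fun i₀ _ => ?_
  split_ifs with hi
  · refine finsum_eq_zero_of_forall_eq_zero fun n => sum_eq_zero fun p _ => ?_
    split_ifs with hp
    · have hj : (p 0).1 ≤ j := by simpa [hp.2] using hp.1 (Fin.zero_le (Fin.last n))
      rw [hf i₀ _ (hS ⟨hi, hj⟩ hij)]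
      exact hΦ0 _ _ _ _
    · rfl
  · rfl

lemma boxTensorMap_eq_boxD [AddCommMonoid A] (hΦ : ∀ i i', IsMultiadditive (extendByZero Φ i i'))
    {N : ℕ} (hN : ∀ n, N ≤ n → ∀ (s : Fin (n + 1) → Σ j, Q j) x,
      amalgamate Φ x (pathLabels (amalgamateMatrix Δ) s) = 0)
    (f : ∀ i j, Q j → M i) (i' : I) (j' : J) (q' : Q j') :
    boxTensorMap Φ Δ f i' j' q'
      = boxD (amalgamate Φ) (amalgamateMatrix Δ) (fun g i => f i g.1 g.2) ⟨j', q'⟩ i' := by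
  have hterm (i : I) (hi : i ≤ i') (n : ℕ) (p : Fin (n + 1) → Σ j, Q j) :
      (if hp : Monotone (fun t => (p t).1) ∧ p (Fin.last n) = ⟨j', q'⟩ then
          Φ i i' hi (f i (p 0).1 (p 0).2)
            (List.ofFn (fun t : Fin n =>
              Δ (p t.castSucc).1 (p t.succ).1
                (hp.1 (Fin.castSucc_lt_succ : t.castSucc < t.succ).le)
                (p t.castSucc).2 (p t.succ).2))
        else 0)
        = if p (Fin.last n) = ⟨j', q'⟩ then
            extendByZero Φ i i' (f i (p 0).1 (p 0).2) (pathLabels (amalgamateMatrix Δ) p)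
          else 0 := by
    by_cases hl : p (Fin.last n) = ⟨j', q'⟩
    · by_cases hm : Monotone fun t => (p t).1
      · rw [dif_pos ⟨hm, hl⟩, if_pos hl, extendByZero, dif_pos hi,
          pathLabels_amalgamateMatrix_of_monotone hm]
      · rw [dif_neg (hm ∘ And.left), if_pos hl,
          (hΦ i i').eq_zero_of_zero_mem (zero_mem_pathLabels_of_not_monotone hm)]
    · rw [dif_neg (hl ∘ And.right), if_neg hl]
  have hext (n : ℕ) (hn : N ≤ n) (s : Fin (n + 1) → Σ j, Q j) (i : I) (x : M i) :
      extendByZero Φ i i' x (pathLabels (amalgamateMatrix Δ) s) = 0 := by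
    rw [extendByZero_eq_amalgamate_single hΦ, hN n hn s]
    rfl
  rw [boxD_eq_sum_range hN, Finset.sum_apply, Finset.sum_apply]
  simp only [pathSum, Finset.sum_apply, amalgamate]
  conv_rhs => arg 2; ext n; rw [sum_comm]
  rw [sum_comm]
  refine sum_congr rfl fun i _ => ?_
  split_ifs with hi
  · simp only [hterm i hi, sum_filter]
    rw [finsum_eq_sum_of_support_subset (s := range N)]
    · congr!
    refine fun n hn => by_contra fun h => hn (sum_eq_zero fun s _ => ?_)
    rw [hext n (by simpa using h) s i _, ite_self]
  · exact (sum_eq_zero fun n _ => sum_eq_zero fun s _ => dif_neg hi).symm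

end BoxTensorMap

end BoxTensor

open BoxTensor

theorem box_tensor_of_filtered_module_and_typeD_is_filtered_complex_general
    -- the dg algebra A over F₂
    (A : Type*) [Ring A] [Algebra (ZMod 2) A]
    (dA : A →ₗ[ZMod 2] A)
    -- finite posets
    {I J : Type*} [Fintype I] [PartialOrder I] [Fintype J] [PartialOrder J]
    -- the I-filtered A∞-module over A, in amalgamated form
    (M : I → Type*) [∀ i, AddCommGroup (M i)] [∀ i, Module (ZMod 2) (M i)]
    (Φ : ∀ i i' : I, i ≤ i' → M i → List A → M i')
    (hΦadd : ∀ i i' h (x y : M i) as, Φ i i' h (x + y) as = Φ i i' h x as + Φ i i' h y as)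
    (hΦml : ∀ i i' h (x : M i) pre (a b : A) post,
      Φ i i' h x (pre ++ (a + b) :: post)
        = Φ i i' h x (pre ++ a :: post) + Φ i i' h x (pre ++ b :: post))
    -- the filtered A∞-module structure equation (amalgamated form)
    (hAinfty : ∀ i i'' (h : i ≤ i'') (x : M i) (as : List A),
      (∑ i' : I, if h' : i ≤ i' ∧ i' ≤ i'' then
          ∑ t ∈ Finset.range (as.length + 1),
            Φ i' i'' h'.2 (Φ i i' h'.1 x (as.take t)) (as.drop t)
        else 0)
      + (∑ t ∈ Finset.range as.length,
          Φ i i'' h x (as.set t (dA (as.getD t 0))))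
      + (∑ t ∈ Finset.range (as.length - 1),
          Φ i i'' h x
            (as.take t ++ (as.getD t 0 * as.getD (t + 1) 0) :: as.drop (t + 2)))
      = 0)
    -- the J-filtered type D structure over A, via generating sets and the
    -- amalgamated structure matrix Δ
    (Q : J → Type*) [∀ j, Fintype (Q j)]
    (Δ : ∀ j j' : J, j ≤ j' → Q j → Q j' → A)
    -- the filtered type D structure equation (amalgamated form)
    (hTypeD : ∀ j j'' (h : j ≤ j'') (q : Q j) (r : Q j''),
      dA (Δ j j'' h q r)
        + ∑ j' : J, (if h' : j ≤ j' ∧ j' ≤ j'' then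
            ∑ p : Q j', Δ j j' h'.1 q p * Δ j' j'' h'.2 p r
          else 0)
      = 0)
    -- at least one of M, P is bounded (so that M ⊠ P is defined):
    -- either all sufficiently long operations of M vanish, or all sufficiently long
    -- iterates of the structure maps of P vanish
    (hbounded :
      (∃ N, ∀ i i' h (x : M i) (as : List A), N ≤ as.length → Φ i i' h x as = 0) ∨
      (∃ N, ∀ n, N ≤ n → ∀ js : Fin (n + 1) → J, ∀ hm : Monotone js,
        ∀ qs : ∀ t, Q (js t), ∃ t : Fin n,
          Δ (js t.castSucc) (js t.succ) (hm (Fin.castSucc_lt_succ : t.castSucc < t.succ).le)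
            (qs t.castSucc) (qs t.succ) = 0))
    -- the total endomorphism of M ⊠ P = ⊕_{(i,j)} M^i ⊗ P^j, whose components are
    -- the structure maps D^{i×j < i'×j'} of the box tensor product
    (Dtot : (∀ i j, Q j → M i) → (∀ i j, Q j → M i))
    (hDtot : ∀ f i' j' (q' : Q j'),
      Dtot f i' j' q' =
        ∑ i : I, if hi : i ≤ i' then
          ∑ᶠ n : ℕ,
            ∑ p : Fin (n + 1) → (Σ j : J, Q j),
              if hp : Monotone (fun t => (p t).1) ∧ p (Fin.last n) = ⟨j', q'⟩ then
                Φ i i' hi (f i (p 0).1 (p 0).2)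
                  (List.ofFn (fun t : Fin n =>
                    Δ (p t.castSucc).1 (p t.succ).1
                      (hp.1 (Fin.castSucc_lt_succ : t.castSucc < t.succ).le)
                      (p t.castSucc).2 (p t.succ).2))
              else 0
        else 0) :
    -- conclusion: M ⊠ P is naturally an I×J-filtered chain complex:
    -- the total structure map is a differential …
    (∀ f, Dtot (Dtot f) = 0) ∧
    -- … respecting the filtration by the poset I × J
    (∀ S : Set (I × J), IsLowerSet S →
      ∀ f : ∀ i j, Q j → M i, (∀ i j, (i, j) ∈ S → f i j = 0) →
        ∀ i j, (i, j) ∈ S → Dtot f i j = 0) := by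
  have hΦ := isMultiadditive_extendByZero hΦadd hΦml
  have hμ := isMultiadditive_amalgamate hΦ
  have hbounded' :=
    hbounded.imp exists_amalgamate_eq_zero exists_zero_mem_pathLabels_amalgamateMatrix
  obtain ⟨N, hN⟩ := exists_pathLabels_vanish hμ hbounded'
  obtain rfl : Dtot = boxTensorMap Φ Δ :=
    funext fun f => funext fun i => funext fun j => funext fun q => hDtot f i j q
  refine ⟨fun f => ?_, fun S hS f hf i j hij => ?_⟩
  · funext i j q
    simp only [boxTensorMap_eq_boxD hΦ (fun n hn s x => (hN n hn s x).1), Sigma.eta,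
      boxD_boxD hμ (isAInftyAction_amalgamate hΦ dA hAinfty)
        (apply_amalgamateMatrix_eq_sum_mul dA hTypeD) hbounded', Pi.zero_apply]
  · refine boxTensorMap_eq_zero_of_isLowerSet (fun i i' h as => ?_) hS hf hij
    simpa [extendByZero, h] using (hΦ i i').map_zero_left as

theorem box_tensor_of_filtered_module_and_typeD_is_filtered_complex
    -- the dg algebra A over F₂
    (A : Type*) [Ring A] [Algebra (ZMod 2) A]
    (dA : A →ₗ[ZMod 2] A)
    (hdA : ∀ a, dA (dA a) = 0)
    (hLeibniz : ∀ a b : A, dA (a * b) = dA a * b + a * dA b)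
    -- finite posets
    {I J : Type*} [Fintype I] [PartialOrder I] [Fintype J] [PartialOrder J]
    -- the I-filtered A∞-module over A, in amalgamated form
    (M : I → Type*) [∀ i, AddCommGroup (M i)] [∀ i, Module (ZMod 2) (M i)]
    (Φ : ∀ i i' : I, i ≤ i' → M i → List A → M i')
    (hΦadd : ∀ i i' h (x y : M i) as, Φ i i' h (x + y) as = Φ i i' h x as + Φ i i' h y as)
    (hΦml : ∀ i i' h (x : M i) pre (a b : A) post,
      Φ i i' h x (pre ++ (a + b) :: post)
        = Φ i i' h x (pre ++ a :: post) + Φ i i' h x (pre ++ b :: post))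
    -- the filtered A∞-module structure equation (amalgamated form)
    (hAinfty : ∀ i i'' (h : i ≤ i'') (x : M i) (as : List A),
      (∑ i' : I, if h' : i ≤ i' ∧ i' ≤ i'' then
          ∑ t ∈ Finset.range (as.length + 1),
            Φ i' i'' h'.2 (Φ i i' h'.1 x (as.take t)) (as.drop t)
        else 0)
      + (∑ t ∈ Finset.range as.length,
          Φ i i'' h x (as.set t (dA (as.getD t 0))))
      + (∑ t ∈ Finset.range (as.length - 1),
          Φ i i'' h x
            (as.take t ++ (as.getD t 0 * as.getD (t + 1) 0) :: as.drop (t + 2)))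
      = 0)
    -- the J-filtered type D structure over A, via generating sets and the
    -- amalgamated structure matrix Δ
    (Q : J → Type*) [∀ j, Fintype (Q j)]
    (Δ : ∀ j j' : J, j ≤ j' → Q j → Q j' → A)
    -- the filtered type D structure equation (amalgamated form)
    (hTypeD : ∀ j j'' (h : j ≤ j'') (q : Q j) (r : Q j''),
      dA (Δ j j'' h q r)
        + ∑ j' : J, (if h' : j ≤ j' ∧ j' ≤ j'' then
            ∑ p : Q j', Δ j j' h'.1 q p * Δ j' j'' h'.2 p r
          else 0)
      = 0)
    -- at least one of M, P is bounded (so that M ⊠ P is defined):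
    -- either all sufficiently long operations of M vanish, or all sufficiently long
    -- iterates of the structure maps of P vanish
    (hbounded :
      (∃ N, ∀ i i' h (x : M i) (as : List A), N ≤ as.length → Φ i i' h x as = 0) ∨
      (∃ N, ∀ n, N ≤ n → ∀ js : Fin (n + 1) → J, ∀ hm : Monotone js,
        ∀ qs : ∀ t, Q (js t), ∃ t : Fin n,
          Δ (js t.castSucc) (js t.succ) (hm (Fin.castSucc_lt_succ : t.castSucc < t.succ).le)
            (qs t.castSucc) (qs t.succ) = 0))
    -- the total endomorphism of M ⊠ P = ⊕_{(i,j)} M^i ⊗ P^j, whose components are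
    -- the structure maps D^{i×j < i'×j'} of the box tensor product
    (Dtot : (∀ i j, Q j → M i) → (∀ i j, Q j → M i))
    (hDtot : ∀ f i' j' (q' : Q j'),
      Dtot f i' j' q' =
        ∑ i : I, if hi : i ≤ i' then
          ∑ᶠ n : ℕ,
            ∑ p : Fin (n + 1) → (Σ j : J, Q j),
              if hp : Monotone (fun t => (p t).1) ∧ p (Fin.last n) = ⟨j', q'⟩ then
                Φ i i' hi (f i (p 0).1 (p 0).2)
                  (List.ofFn (fun t : Fin n =>
                    Δ (p t.castSucc).1 (p t.succ).1
                      (hp.1 (Fin.castSucc_lt_succ : t.castSucc < t.succ).le)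
                      (p t.castSucc).2 (p t.succ).2))
              else 0
        else 0) :
    -- conclusion: M ⊠ P is naturally an I×J-filtered chain complex:
    -- the total structure map is a differential …
    (∀ f, Dtot (Dtot f) = 0) ∧
    -- … respecting the filtration by the poset I × J
    (∀ S : Set (I × J), IsLowerSet S →
      ∀ f : ∀ i j, Q j → M i, (∀ i j, (i, j) ∈ S → f i j = 0) →
        ∀ i j, (i, j) ∈ S → Dtot f i j = 0) :=
  box_tensor_of_filtered_module_and_typeD_is_filtered_complex_general A dA M Φ hΦadd hΦml hAinfty Q
    Δ hTypeD hbounded Dtot hDtot
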